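/- arXiv:1604.06286 — 2 statements merged into one kernel-verified Lean document; each statement's English description precedes it below -/
import Mathlib

section
/- Let n ≥ 2, let A be the Cartan matrix of type C_n, and let σ be any permutation of {1,…,n}. Then the kernel of B_σ, viewed as a linear map ℚⁿ → ℚⁿ, has dimension 0 if n is even and dimension 1 if n is odd. -/
open Matrix

/-- The Cartan matrix of type `Cₙ` (nodes indexed `0, …, n-1`; the long root is the last
node): `a i i = 2`, consecutive nodes give `-1`, except `a (n-1) (n-2) = -2`. -/
def cartanC (n : ℕ) : Matrix (Fin n) (Fin n) ℚ :=
  fun i j => if i = j then 2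
    else if i.val + 1 = j.val then -1
    else if j.val + 1 = i.val then (if i.val = n - 1 then -2 else -1) else 0

/-- The acyclic exchange matrix `B_σ` attached to a Cartan matrix `A` and a permutation `σ`:
`b i i = 0`, `b i j = -a i j` if `σ i < σ j`, and `b i j = a i j` if `σ i > σ j`. -/
def Bmat {n : ℕ} (A : Matrix (Fin n) (Fin n) ℚ) (σ : Equiv.Perm (Fin n)) :
    Matrix (Fin n) (Fin n) ℚ :=
  fun i j => if i = j then 0 else if σ i < σ j then -A i j else A i j

/-! `B_σ` is nonzero exactly on the edges of the path graph on `Fin n`, and nothing else about it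
matters. For such a matrix `M`, row `i` of `M x = 0` relates the coordinates of `x` at the (at most
two) neighbours of `i`. Row `0` kills `x 1`, and inductively every odd coordinate, while each even
coordinate vanishes iff `x 0` does; hence `x ↦ x 0` is injective on the kernel. For even `n` the
last row kills `x (n - 2)`, so the kernel is zero. For odd `n`, `M` maps vectors supported on the
even indices to vectors supported on the odd ones, of which there are fewer, so the kernel is
nonzero. -/

open SimpleGraph Module

theorem Fin.card_odd_lt_card_even {n : ℕ} (hn : Odd n) :
    Fintype.card {i : Fin n // ¬Even i.val} < Fintype.card {j : Fin n // Even j.val} := by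
  refine Fintype.card_lt_of_injective_not_surjective
    (fun i => ⟨⟨i.1.val + 1, ?_⟩, (Nat.not_even_iff_odd.mp i.2).add_one⟩) ?_ fun h => ?_
  · obtain ⟨m, hm⟩ := hn
    obtain ⟨k, hk⟩ := Nat.not_even_iff_odd.mp i.2
    omega
  · intro i i' h
    exact Subtype.ext (Fin.ext (by simpa [Subtype.ext_iff, Fin.ext_iff] using h))
  · obtain ⟨i, hi⟩ := h ⟨⟨0, hn.pos⟩, ⟨0, rfl⟩⟩
    simp [Subtype.ext_iff, Fin.ext_iff] at hi

namespace Matrix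

def HasSupportGraph {ι K : Type*} [Zero K] (M : Matrix ι ι K) (G : SimpleGraph ι) : Prop :=
  ∀ i j, M i j ≠ 0 ↔ G.Adj i j

namespace HasSupportGraph

section Propagation

variable {K : Type*} [Semiring K] [NoZeroDivisors K]

theorem eq_zero_of_mulVec_eq_zero {ι : Type*} [Fintype ι] {G : SimpleGraph ι}
    {M : Matrix ι ι K} (hM : M.HasSupportGraph G) {x : ι → K} (hx : M *ᵥ x = 0) {i j : ι}
    (hij : G.Adj i j) (hother : ∀ k, G.Adj i k → k ≠ j → x k = 0) : x j = 0 := by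
  have hoff : ∀ k ≠ j, M i k * x k = 0 := fun k hkj => by
    by_cases hik : G.Adj i k
    · rw [hother k hik hkj, mul_zero]
    · rw [not_ne_iff.mp ((hM i k).not.mpr hik), zero_mul]
  have hrow : M i j * x j = 0 := by
    simpa [mulVec, dotProduct, Finset.sum_eq_single j fun k _ => hoff k] using congrFun hx i
  exact (mul_eq_zero.mp hrow).resolve_left ((hM i j).mpr hij)

variable {n : ℕ} {M : Matrix (Fin n) (Fin n) K} {x : Fin n → K}

theorem apply_succ_eq_zero (hM : M.HasSupportGraph (pathGraph n)) (hx : M *ᵥ x = 0)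
    {i j : Fin n} (hij : i.val + 1 = j.val)
    (hprev : ∀ k : Fin n, k.val + 1 = i.val → x k = 0) : x j = 0 :=
  hM.eq_zero_of_mulVec_eq_zero hx (pathGraph_adj.mpr (Or.inl hij)) fun k hik hkj => by
    have := Fin.val_ne_of_ne hkj
    exact hprev k (by rw [pathGraph_adj] at hik; omega)

theorem apply_pred_eq_zero (hM : M.HasSupportGraph (pathGraph n)) (hx : M *ᵥ x = 0)
    {i j : Fin n} (hji : j.val + 1 = i.val)
    (hnext : ∀ k : Fin n, i.val + 1 = k.val → x k = 0) : x j = 0 :=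
  hM.eq_zero_of_mulVec_eq_zero hx (pathGraph_adj.mpr (Or.inr hji)) fun k hik hkj => by
    have := Fin.val_ne_of_ne hkj
    exact hnext k (by rw [pathGraph_adj] at hik; omega)

theorem apply_eq_zero_of_odd (hM : M.HasSupportGraph (pathGraph n)) (hx : M *ᵥ x = 0)
    {j : Fin n} (hj : Odd j.val) : x j = 0 := by
  obtain ⟨m, hm⟩ := hj
  induction m generalizing j with
  | zero =>
    exact hM.apply_succ_eq_zero hx (i := ⟨0, by omega⟩) (by simp [hm]) fun k hk => by simp at hk
  | succ m ih =>
    exact hM.apply_succ_eq_zero hx (i := ⟨2 * m + 2, by omega⟩) (by dsimp only; omega)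
      fun k hk => ih (by dsimp only at hk; omega)

theorem apply_two_mul_eq_zero_iff (hM : M.HasSupportGraph (pathGraph n)) (hx : M *ᵥ x = 0)
    (m : ℕ) (hm : 2 * m < n) :
    x ⟨2 * m, hm⟩ = 0 ↔ x ⟨0, by omega⟩ = 0 := by
  induction m with
  | zero => rfl
  | succ m ih =>
    rw [← ih (by omega)]
    constructor
    · intro h
      exact hM.apply_pred_eq_zero hx (i := ⟨2 * m + 1, by omega⟩) rfl fun k hk => by
        rwa [show k = ⟨2 * (m + 1), hm⟩ from Fin.ext (by dsimp only at hk ⊢; omega)]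
    · intro h
      refine hM.apply_succ_eq_zero hx (i := ⟨2 * m + 1, by omega⟩) (by dsimp only; omega)
        fun k hk => ?_
      rwa [show k = ⟨2 * m, by omega⟩ from Fin.ext (by dsimp only at hk ⊢; omega)]

theorem eq_zero_of_apply_zero (hM : M.HasSupportGraph (pathGraph n)) (hx : M *ᵥ x = 0)
    (hn : 0 < n) (h : x ⟨0, hn⟩ = 0) : x = 0 := by
  funext j
  obtain ⟨m, hm | hm⟩ := Nat.even_or_odd' j.val
  · rw [show j = ⟨2 * m, by omega⟩ from Fin.ext hm]
    exact (hM.apply_two_mul_eq_zero_iff hx m _).mpr h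
  · exact hM.apply_eq_zero_of_odd hx ⟨m, hm⟩

theorem eq_zero_of_even (hM : M.HasSupportGraph (pathGraph n)) (hx : M *ᵥ x = 0)
    (hn : Even n) : x = 0 := by
  rcases Nat.eq_zero_or_pos n with rfl | hpos
  · exact funext fun j => j.elim0
  obtain ⟨m, hm⟩ := hn
  have hlast : x ⟨n - 2, by omega⟩ = 0 :=
    hM.apply_pred_eq_zero hx (i := ⟨n - 1, by omega⟩) (by dsimp only; omega)
      fun k hk => by dsimp only at hk; omega
  have hx0 : x ⟨0, hpos⟩ = 0 := by
    rw [← hM.apply_two_mul_eq_zero_iff hx (m - 1) (by omega)]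
    rwa [show (⟨2 * (m - 1), _⟩ : Fin n) = ⟨n - 2, by omega⟩ from
      Fin.ext (by dsimp only; omega)]
  exact hM.eq_zero_of_apply_zero hx hpos hx0

end Propagation

variable {K : Type*} [Field K] {n : ℕ} {M : Matrix (Fin n) (Fin n) K}

theorem ker_toLin'_ne_bot_of_odd (hM : M.HasSupportGraph (pathGraph n)) (hn : Odd n) :
    LinearMap.ker (toLin' M) ≠ ⊥ := by
  let N : Matrix {i : Fin n // ¬Even i.val} {j : Fin n // Even j.val} K := M.submatrix (↑) (↑)
  obtain ⟨y, hyN, hy⟩ := (Submodule.ne_bot_iff _).mp <| LinearMap.ker_ne_bot_of_finrank_lt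
    (f := toLin' N) (by simpa using Fin.card_odd_lt_card_even hn)
  obtain ⟨j₀, hj₀⟩ := Function.ne_iff.mp hy
  let x : Fin n → K := fun j => if h : Even j.val then y ⟨j, h⟩ else 0
  refine (Submodule.ne_bot_iff _).mpr ⟨x, ?_, fun h => hj₀ ?_⟩
  · rw [LinearMap.mem_ker, toLin'_apply]
    funext i
    rw [mulVec, dotProduct, ← Fintype.sum_subtype_add_sum_subtype (fun j : Fin n => Even j.val)]
    have hodd : ∑ j : {j : Fin n // ¬Even j.val}, M i j * x j = 0 :=
      Finset.sum_eq_zero fun j _ => by simp [x, j.2]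
    rw [hodd, add_zero, Pi.zero_apply]
    by_cases hi : Even i.val
    · refine Finset.sum_eq_zero fun j _ => ?_
      have hij : ¬(pathGraph n).Adj i j := by
        obtain ⟨a, ha⟩ := hi
        obtain ⟨b, hb⟩ := j.2
        rw [pathGraph_adj]
        omega
      rw [not_ne_iff.mp ((hM i j).not.mpr hij), zero_mul]
    · rw [LinearMap.mem_ker, toLin'_apply] at hyN
      have hrow := congrFun hyN ⟨i, hi⟩
      rw [Pi.zero_apply, mulVec, dotProduct] at hrow
      rw [← hrow]
      exact Finset.sum_congr rfl fun j _ => by simp [N, x, j.2]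
  · simpa [x, j₀.2] using congrFun h j₀

theorem finrank_ker_toLin'_of_pathGraph (hM : M.HasSupportGraph (pathGraph n)) :
    finrank K (LinearMap.ker (toLin' M)) = if Even n then 0 else 1 := by
  split_ifs with hn
  · rw [Submodule.finrank_eq_zero, Submodule.eq_bot_iff]
    intro x hx
    exact hM.eq_zero_of_even (by rwa [LinearMap.mem_ker, toLin'_apply] at hx) hn
  · have hodd := Nat.not_even_iff_odd.mp hn
    have hpos : 0 < n := hodd.pos
    let ev0 : LinearMap.ker (toLin' M) →ₗ[K] K :=
      LinearMap.proj (⟨0, hpos⟩ : Fin n) ∘ₗ (LinearMap.ker (toLin' M)).subtype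
    have hinj : Function.Injective ev0 := by
      rw [← LinearMap.ker_eq_bot, Submodule.eq_bot_iff]
      rintro ⟨x, hx⟩ h0
      exact Subtype.ext <| hM.eq_zero_of_apply_zero
        (by rwa [LinearMap.mem_ker, toLin'_apply] at hx) hpos (LinearMap.mem_ker.mp h0)
    refine le_antisymm (by simpa using LinearMap.finrank_le_finrank_of_injective hinj) ?_
    exact Submodule.one_le_finrank_iff.mpr (hM.ker_toLin'_ne_bot_of_odd hodd)

end HasSupportGraph

end Matrix

theorem Bmat_ne_zero_iff {n : ℕ} (A : Matrix (Fin n) (Fin n) ℚ) (σ : Equiv.Perm (Fin n))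
    (i j : Fin n) : Bmat A σ i j ≠ 0 ↔ i ≠ j ∧ A i j ≠ 0 := by
  unfold Bmat
  split_ifs <;> simp [*]

theorem cartanC_ne_zero_iff_of_ne {n : ℕ} {i j : Fin n} (hij : i ≠ j) :
    cartanC n i j ≠ 0 ↔ (pathGraph n).Adj i j := by
  rw [pathGraph_adj]
  unfold cartanC
  split_ifs <;> simp_all

theorem hasSupportGraph_Bmat_cartanC {n : ℕ} (σ : Equiv.Perm (Fin n)) :
    (Bmat (cartanC n) σ).HasSupportGraph (pathGraph n) := fun i j => by
  rw [Bmat_ne_zero_iff]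
  by_cases hij : i = j
  · simp [hij]
  · rw [cartanC_ne_zero_iff_of_ne hij]
    exact and_iff_right hij

theorem kernel_dim_Bmat_typeC_general (n : ℕ) (σ : Equiv.Perm (Fin n)) :
    Module.finrank ℚ (LinearMap.ker (Matrix.toLin' (Bmat (cartanC n) σ))) =
      if Even n then 0 else 1 :=
  (hasSupportGraph_Bmat_cartanC σ).finrank_ker_toLin'_of_pathGraph

/-- In type `Cₙ`, the kernel of any acyclic exchange matrix `B_σ` has dimension `0`
if `n` is even and `1` if `n` is odd. -/
theorem kernel_dim_Bmat_typeC (n : ℕ) (hn : 2 ≤ n) (σ : Equiv.Perm (Fin n)) :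
    Module.finrank ℚ (LinearMap.ker (Matrix.toLin' (Bmat (cartanC n) σ))) =
      if Even n then 0 else 1 :=
  kernel_dim_Bmat_typeC_general n σ
end

section
/- Let n = 2k ≥ 4 be even, let A be the Cartan matrix of type D_n, and let σ be any permutation of {1,…,n}. Then the kernel of B_σ over ℚ is two-dimensional and is spanned by the following two vectors: (1) the vector u equal to e_{n−1} + e_n if σ(n−2) lies strictly between σ(n−1) and σ(n), and equal to e_{n−1} − e_n otherwise; and (2) a vector w whose support {i : w_i ≠ 0} is exactly the set of odd indices {1, 3, …, n−1}; in particular the support of w has exactly k connected components in the Dynkin diagram of type D_n. Here e_i denotes the i-th standard basis vector of ℚⁿ. -/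
open Matrix

/-- The Cartan matrix of type `Dₙ` (nodes indexed `0, …, n-1`; the Dynkin diagram has
edges `{i, i+1}` for `i + 1 ≤ n - 2` and the edge `{n-3, n-1}`). -/
def cartanD (n : ℕ) : Matrix (Fin n) (Fin n) ℚ :=
  fun i j => if i = j then 2
    else if (i.val + 1 = j.val ∧ j.val ≤ n - 2) ∨ (j.val + 1 = i.val ∧ i.val ≤ n - 2) ∨
      (i.val = n - 3 ∧ j.val = n - 1) ∨ (i.val = n - 1 ∧ j.val = n - 3) then -1 else 0

/-- The Dynkin diagram of type `Dₙ` as a graph on `Fin n`: edges `{i, i+1}` for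
`i + 1 ≤ n - 2`, together with the edge `{n-3, n-1}`. -/
def dynkinGraphD (n : ℕ) : SimpleGraph (Fin n) :=
  SimpleGraph.fromRel fun i j =>
    (i.val + 1 = j.val ∧ j.val ≤ n - 2) ∨ (i.val = n - 3 ∧ j.val = n - 1)

/-!
Off the diagonal, `B_σ` is a `±1`-weighted adjacency matrix of the Dynkin diagram, so `B_σ x = 0`
is one equation per node on the values of `x` at its neighbours. The leaf `0` forces `x 1 = 0`,
and the equation at node `m + 1` carries `x m = 0` to `x (m + 2) = 0`; together with the equation
at the branch node this shows that a kernel vector vanishing at `0` and `n - 1` is zero, so the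
kernel has dimension at most two. Solving the path equations from `(x 0, x 1) = (1, 0)` gives a
kernel vector supported on the even nodes when `n` is even, and the branch equation is solved by
`e (n-2) ± e (n-1)`, the sign recording whether `σ (n-3)` lies between `σ (n-2)` and `σ (n-1)`.
The even nodes are pairwise non-adjacent, so the support has `n / 2` components.
-/

namespace TypeD

variable {n : ℕ}

instance : DecidableRel (dynkinGraphD n).Adj := fun i j =>
  decidable_of_iff' _ (SimpleGraph.fromRel_adj _ i j)

variable (σ : Equiv.Perm (Fin n))

lemma dynkinGraphD_adj_iff {i j : Fin n} (hij : i ≠ j) : (dynkinGraphD n).Adj i j ↔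
    (i.val + 1 = j.val ∧ j.val ≤ n - 2) ∨ (j.val + 1 = i.val ∧ i.val ≤ n - 2) ∨
      (i.val = n - 3 ∧ j.val = n - 1) ∨ (i.val = n - 1 ∧ j.val = n - 3) := by
  simp only [dynkinGraphD, SimpleGraph.fromRel_adj, ne_eq, hij, not_false_eq_true, true_and]
  tauto

def edgeSign (i j : Fin n) : ℚ := if σ i < σ j then 1 else -1

lemma edgeSign_mul_self (i j : Fin n) : edgeSign σ i j * edgeSign σ i j = 1 := by
  unfold edgeSign; split_ifs <;> norm_num

lemma edgeSign_ne_zero (i j : Fin n) : edgeSign σ i j ≠ 0 := by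
  unfold edgeSign; split_ifs <;> norm_num

lemma Bmat_cartanD_apply (i j : Fin n) :
    Bmat (cartanD n) σ i j = if (dynkinGraphD n).Adj i j then edgeSign σ i j else 0 := by
  by_cases hij : i = j
  · simp [Bmat, hij]
  · simp only [Bmat, cartanD, dynkinGraphD_adj_iff hij, edgeSign, hij, if_false]
    split_ifs <;> norm_num

lemma mulVec_Bmat_cartanD (x : Fin n → ℚ) {i : Fin n} {s : Finset (Fin n)}
    (hs : ∀ j, (dynkinGraphD n).Adj i j ↔ j ∈ s) :
    (Bmat (cartanD n) σ *ᵥ x) i = ∑ j ∈ s, edgeSign σ i j * x j := by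
  simp only [mulVec, dotProduct, Bmat_cartanD_apply, hs, ite_mul, zero_mul]
  rw [Finset.sum_ite_mem, Finset.univ_inter]

section Rows

variable (x : Fin n → ℚ)

lemma mulVec_Bmat_cartanD_zero (hn : 4 ≤ n) :
    (Bmat (cartanD n) σ *ᵥ x) ⟨0, by omega⟩ =
      edgeSign σ ⟨0, by omega⟩ ⟨1, by omega⟩ * x ⟨1, by omega⟩ := by
  rw [mulVec_Bmat_cartanD σ x (s := {⟨1, by omega⟩}) fun j => ?_, Finset.sum_singleton]
  simp only [dynkinGraphD, SimpleGraph.fromRel_adj, Finset.mem_singleton, Fin.ext_iff, ne_eq]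
  omega

lemma mulVec_Bmat_cartanD_succ {m : ℕ} (hm : m + 5 ≤ n) :
    (Bmat (cartanD n) σ *ᵥ x) ⟨m + 1, by omega⟩ =
      edgeSign σ ⟨m + 1, by omega⟩ ⟨m, by omega⟩ * x ⟨m, by omega⟩ +
        edgeSign σ ⟨m + 1, by omega⟩ ⟨m + 2, by omega⟩ * x ⟨m + 2, by omega⟩ := by
  rw [mulVec_Bmat_cartanD σ x (s := {⟨m, by omega⟩, ⟨m + 2, by omega⟩}) fun j => ?_,
    Finset.sum_pair (by simp [Fin.ext_iff])]
  simp only [dynkinGraphD, SimpleGraph.fromRel_adj, Finset.mem_insert, Finset.mem_singleton,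
    Fin.ext_iff, ne_eq]
  omega

lemma mulVec_Bmat_cartanD_branch (hn : 4 ≤ n) :
    (Bmat (cartanD n) σ *ᵥ x) ⟨n - 3, by omega⟩ =
      edgeSign σ ⟨n - 3, by omega⟩ ⟨n - 4, by omega⟩ * x ⟨n - 4, by omega⟩ +
        edgeSign σ ⟨n - 3, by omega⟩ ⟨n - 2, by omega⟩ * x ⟨n - 2, by omega⟩ +
          edgeSign σ ⟨n - 3, by omega⟩ ⟨n - 1, by omega⟩ * x ⟨n - 1, by omega⟩ := by
  rw [mulVec_Bmat_cartanD σ x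
      (s := {⟨n - 4, by omega⟩, ⟨n - 2, by omega⟩, ⟨n - 1, by omega⟩}) fun j => ?_,
    Finset.sum_insert (by simp [Fin.ext_iff]; omega),
    Finset.sum_pair (by simp [Fin.ext_iff]; omega), add_assoc]
  simp only [dynkinGraphD, SimpleGraph.fromRel_adj, Finset.mem_insert, Finset.mem_singleton,
    Fin.ext_iff, ne_eq, true_and]
  omega

lemma mulVec_Bmat_cartanD_fork (hn : 4 ≤ n) {m : ℕ} (hm : m = n - 2 ∨ m = n - 1) :
    (Bmat (cartanD n) σ *ᵥ x) ⟨m, by omega⟩ =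
      edgeSign σ ⟨m, by omega⟩ ⟨n - 3, by omega⟩ * x ⟨n - 3, by omega⟩ := by
  rw [mulVec_Bmat_cartanD σ x (s := {⟨n - 3, by omega⟩}) fun j => ?_, Finset.sum_singleton]
  simp only [dynkinGraphD, SimpleGraph.fromRel_adj, Finset.mem_singleton, Fin.ext_iff, ne_eq]
  omega

end Rows

def betweenSign (i j l : Fin n) : ℚ :=
  if min (σ j) (σ l) < σ i ∧ σ i < max (σ j) (σ l) then 1 else -1

lemma betweenSign_mul_self (i j l : Fin n) : betweenSign σ i j l * betweenSign σ i j l = 1 := by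
  unfold betweenSign; split_ifs <;> norm_num

lemma betweenSign_ne_zero (i j l : Fin n) : betweenSign σ i j l ≠ 0 := by
  unfold betweenSign; split_ifs <;> norm_num

lemma edgeSign_add_betweenSign_mul {i j l : Fin n} (hj : i ≠ j) (hl : i ≠ l) :
    edgeSign σ i j + betweenSign σ i j l * edgeSign σ i l = 0 := by
  unfold edgeSign betweenSign
  rcases (σ.injective.ne hj).lt_or_gt with hij | hij <;>
    rcases (σ.injective.ne hl).lt_or_gt with hil | hil <;>
    simp [hij, hil, hij.not_gt, hil.not_gt]

def forkVec (hn : 4 ≤ n) : Fin n → ℚ :=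
  Pi.single ⟨n - 2, by omega⟩ 1 +
    betweenSign σ ⟨n - 3, by omega⟩ ⟨n - 2, by omega⟩ ⟨n - 1, by omega⟩ •
      Pi.single ⟨n - 1, by omega⟩ 1

lemma forkVec_apply_of_le (hn : 4 ≤ n) {m : ℕ} (hm : m ≤ n - 3) :
    forkVec σ hn ⟨m, by omega⟩ = 0 := by
  simp only [forkVec, Pi.add_apply, Pi.smul_apply, Pi.single_apply, Fin.ext_iff, smul_eq_mul]
  rw [if_neg (by omega), if_neg (by omega)]
  ring

lemma forkVec_apply_last (hn : 4 ≤ n) :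
    forkVec σ hn ⟨n - 1, by omega⟩ =
      betweenSign σ ⟨n - 3, by omega⟩ ⟨n - 2, by omega⟩ ⟨n - 1, by omega⟩ := by
  simp only [forkVec, Pi.add_apply, Pi.smul_apply, Pi.single_apply, Fin.ext_iff, smul_eq_mul]
  rw [if_neg (by omega), if_true]
  ring

lemma forkVec_apply_penultimate (hn : 4 ≤ n) :
    forkVec σ hn ⟨n - 2, by omega⟩ = 1 := by
  simp only [forkVec, Pi.add_apply, Pi.smul_apply, Pi.single_apply, Fin.ext_iff, smul_eq_mul]
  rw [if_true, if_neg (by omega)]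
  ring

lemma forkVec_eq_ite (hn : 4 ≤ n) :
    forkVec σ hn =
      if min (σ ⟨n - 2, by omega⟩) (σ ⟨n - 1, by omega⟩) < σ ⟨n - 3, by omega⟩ ∧
          σ ⟨n - 3, by omega⟩ < max (σ ⟨n - 2, by omega⟩) (σ ⟨n - 1, by omega⟩) then
        Pi.single ⟨n - 2, by omega⟩ 1 + Pi.single ⟨n - 1, by omega⟩ 1
      else Pi.single ⟨n - 2, by omega⟩ 1 - Pi.single ⟨n - 1, by omega⟩ 1 := by
  unfold forkVec betweenSign
  split_ifs <;> simp [sub_eq_add_neg]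

lemma mulVec_forkVec (hn : 4 ≤ n) : Bmat (cartanD n) σ *ᵥ forkVec σ hn = 0 := by
  funext ⟨m, hm⟩
  rcases (by omega : m = 0 ∨ (1 ≤ m ∧ m + 4 ≤ n) ∨ m = n - 3 ∨ m = n - 2 ∨ m = n - 1)
    with rfl | ⟨hm1, hm4⟩ | rfl | hfork | hfork
  · rw [mulVec_Bmat_cartanD_zero σ _ hn, forkVec_apply_of_le σ hn (by omega), mul_zero,
      Pi.zero_apply]
  · obtain ⟨a, rfl⟩ : ∃ a, m = a + 1 := ⟨m - 1, by omega⟩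
    rw [mulVec_Bmat_cartanD_succ σ _ (by omega), forkVec_apply_of_le σ hn (by omega),
      forkVec_apply_of_le σ hn (by omega)]
    simp
  · have hsum := edgeSign_add_betweenSign_mul σ
      (i := ⟨n - 3, by omega⟩) (j := ⟨n - 2, by omega⟩) (l := ⟨n - 1, by omega⟩)
      (by simp [Fin.ext_iff]; omega) (by simp [Fin.ext_iff]; omega)
    rw [mulVec_Bmat_cartanD_branch σ _ hn, forkVec_apply_of_le σ hn (by omega),
      forkVec_apply_penultimate, forkVec_apply_last, Pi.zero_apply]
    linear_combination hsum
  all_goals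
    rw [mulVec_Bmat_cartanD_fork σ _ hn (by omega), forkVec_apply_of_le σ hn le_rfl, mul_zero,
      Pi.zero_apply]

/-- Solution of the equations of the rows `1, …, n - 3` of `B_σ` with initial values `1, 0`. -/
def evenVec : Fin n → ℚ
  | ⟨0, _⟩ => 1
  | ⟨1, _⟩ => 0
  | ⟨m + 2, h⟩ =>
    -(edgeSign σ ⟨m + 1, by omega⟩ ⟨m, by omega⟩ * edgeSign σ ⟨m + 1, by omega⟩ ⟨m + 2, h⟩) *
      evenVec ⟨m, by omega⟩

lemma evenVec_apply_zero (hn : 0 < n) : evenVec σ ⟨0, hn⟩ = 1 := by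
  rw [evenVec]

lemma evenVec_ne_zero_iff (i : Fin n) : evenVec σ i ≠ 0 ↔ i.val % 2 = 0 := by
  obtain ⟨m, hm⟩ := i
  induction m using Nat.twoStepInduction with
  | zero => simp [evenVec]
  | one => simp [evenVec]
  | more m ih _ =>
    rw [evenVec, mul_ne_zero_iff, ih (by omega)]
    simp only [neg_ne_zero, mul_ne_zero_iff, edgeSign_ne_zero, ne_eq, not_false_eq_true,
      true_and]
    omega

lemma edgeSign_mul_evenVec_add {a b c : ℕ} (hb : b = a + 1) (hc : c = a + 2) (hcn : c < n) :
    edgeSign σ ⟨b, by omega⟩ ⟨a, by omega⟩ * evenVec σ ⟨a, by omega⟩ +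
      edgeSign σ ⟨b, by omega⟩ ⟨c, hcn⟩ * evenVec σ ⟨c, hcn⟩ = 0 := by
  subst hb hc
  rw [evenVec]
  linear_combination (-edgeSign σ ⟨a + 1, by omega⟩ ⟨a, by omega⟩ * evenVec σ ⟨a, by omega⟩) *
    edgeSign_mul_self σ ⟨a + 1, by omega⟩ ⟨a + 2, hcn⟩

lemma evenVec_of_odd {m : ℕ} (hm : m < n) (hodd : m % 2 = 1) :
    evenVec σ ⟨m, hm⟩ = 0 := by
  simpa [hodd] using (evenVec_ne_zero_iff σ ⟨m, hm⟩).not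

lemma mulVec_evenVec (hn : 4 ≤ n) (heven : n % 2 = 0) :
    Bmat (cartanD n) σ *ᵥ evenVec σ = 0 := by
  funext ⟨m, hm⟩
  rcases (by omega : m = 0 ∨ (1 ≤ m ∧ m + 4 ≤ n) ∨ m = n - 3 ∨ m = n - 2 ∨ m = n - 1)
    with rfl | ⟨hm1, hm4⟩ | rfl | hfork | hfork
  · rw [mulVec_Bmat_cartanD_zero σ _ hn, evenVec_of_odd σ _ (by omega), mul_zero, Pi.zero_apply]
  · obtain ⟨a, rfl⟩ : ∃ a, m = a + 1 := ⟨m - 1, by omega⟩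
    rw [mulVec_Bmat_cartanD_succ σ _ (by omega)]
    exact edgeSign_mul_evenVec_add σ rfl rfl _
  · rw [mulVec_Bmat_cartanD_branch σ _ hn, edgeSign_mul_evenVec_add σ (by omega) (by omega),
      evenVec_of_odd σ _ (by omega)]
    simp
  all_goals
    rw [mulVec_Bmat_cartanD_fork σ _ hn (by omega), evenVec_of_odd σ _ (by omega), mul_zero,
      Pi.zero_apply]

lemma eq_zero_of_mulVec_eq_zero (hn : 4 ≤ n) {x : Fin n → ℚ}
    (hx : Bmat (cartanD n) σ *ᵥ x = 0) (h0 : x ⟨0, by omega⟩ = 0)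
    (hlast : x ⟨n - 1, by omega⟩ = 0) : x = 0 := by
  have hrow (i : Fin n) : (Bmat (cartanD n) σ *ᵥ x) i = 0 := congrFun hx i
  have hpath (m : ℕ) (hm : m ≤ n - 3) : x ⟨m, by omega⟩ = 0 := by
    induction m using Nat.twoStepInduction with
    | zero => exact h0
    | one =>
      have h := hrow ⟨0, by omega⟩
      rwa [mulVec_Bmat_cartanD_zero σ x hn, mul_eq_zero_iff_left (edgeSign_ne_zero σ _ _)] at h
    | more m ih _ =>
      have h := hrow ⟨m + 1, by omega⟩
      rwa [mulVec_Bmat_cartanD_succ σ x (by omega), ih (by omega), mul_zero, zero_add,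
        mul_eq_zero_iff_left (edgeSign_ne_zero σ _ _)] at h
  have hpen : x ⟨n - 2, by omega⟩ = 0 := by
    have h := hrow ⟨n - 3, by omega⟩
    rwa [mulVec_Bmat_cartanD_branch σ x hn, hpath (n - 4) (by omega), hlast, mul_zero, mul_zero,
      zero_add, add_zero, mul_eq_zero_iff_left (edgeSign_ne_zero σ _ _)] at h
  funext ⟨m, hm⟩
  rcases (by omega : m ≤ n - 3 ∨ m = n - 2 ∨ m = n - 1) with h | rfl | rfl
  · exact hpath m h
  · exact hpen
  · exact hlast

lemma ker_toLin'_Bmat_cartanD (hn : 4 ≤ n) (heven : n % 2 = 0) :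
    LinearMap.ker (toLin' (Bmat (cartanD n) σ)) =
      Submodule.span ℚ {forkVec σ hn, evenVec σ} := by
  apply le_antisymm
  · intro x hx
    rw [LinearMap.mem_ker, toLin'_apply] at hx
    set ε := betweenSign σ ⟨n - 3, by omega⟩ ⟨n - 2, by omega⟩ ⟨n - 1, by omega⟩
    have hε := betweenSign_mul_self σ ⟨n - 3, by omega⟩ ⟨n - 2, by omega⟩ ⟨n - 1, by omega⟩
    set a := ε * x ⟨n - 1, by omega⟩
    set b := x ⟨0, by omega⟩
    have hrest := eq_zero_of_mulVec_eq_zero σ hn (x := x - a • forkVec σ hn - b • evenVec σ)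
      (by rw [mulVec_sub, mulVec_sub, mulVec_smul, mulVec_smul, hx, mulVec_forkVec,
        mulVec_evenVec σ hn heven]; simp)
      (by simp [b, forkVec_apply_of_le σ hn (Nat.zero_le _), evenVec_apply_zero])
      (by
        simp only [Pi.sub_apply, Pi.smul_apply, smul_eq_mul, forkVec_apply_last,
          evenVec_of_odd σ _ (by omega : (n - 1) % 2 = 1), a]
        linear_combination (-x ⟨n - 1, by omega⟩) * hε)
    rw [Submodule.mem_span_pair]
    exact ⟨a, b, by rw [sub_sub, sub_eq_zero] at hrest; exact hrest.symm⟩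
  · rw [Submodule.span_le]
    rintro y (rfl | rfl) <;> rw [SetLike.mem_coe, LinearMap.mem_ker, toLin'_apply]
    exacts [mulVec_forkVec σ hn, mulVec_evenVec σ hn heven]

lemma linearIndependent_forkVec_evenVec (hn : 4 ≤ n) (heven : n % 2 = 0) :
    LinearIndependent ℚ ![forkVec σ hn, evenVec σ] := by
  rw [LinearIndependent.pair_iff]
  intro s t hst
  have h0 := congrFun hst ⟨0, by omega⟩
  have hlast := congrFun hst ⟨n - 1, by omega⟩
  simp only [Pi.add_apply, Pi.smul_apply, smul_eq_mul, Pi.zero_apply] at h0 hlast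
  rw [forkVec_apply_of_le σ hn (Nat.zero_le _), evenVec_apply_zero, mul_zero, zero_add,
    mul_one] at h0
  rw [forkVec_apply_last, evenVec_of_odd σ _ (by omega), mul_zero, add_zero,
    mul_eq_zero_iff_right (betweenSign_ne_zero σ _ _ _)] at hlast
  exact ⟨hlast, h0⟩

lemma finrank_ker_toLin'_Bmat_cartanD (hn : 4 ≤ n) (heven : n % 2 = 0) :
    Module.finrank ℚ (LinearMap.ker (toLin' (Bmat (cartanD n) σ))) = 2 := by
  rw [ker_toLin'_Bmat_cartanD σ hn heven, ← Matrix.range_cons_cons_empty _ _ ![],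
    finrank_span_eq_card (linearIndependent_forkVec_evenVec σ hn heven), Fintype.card_fin]

lemma dynkinGraphD_induce_even_eq_bot (heven : n % 2 = 0) :
    (dynkinGraphD n).induce {i : Fin n | i.val % 2 = 0} = ⊥ := by
  ext ⟨i, hi : i.val % 2 = 0⟩ ⟨j, hj : j.val % 2 = 0⟩
  simp only [SimpleGraph.comap_adj, Function.Embedding.coe_subtype, dynkinGraphD,
    SimpleGraph.fromRel_adj, SimpleGraph.bot_adj, iff_false]
  omega

end TypeD

lemma SimpleGraph.card_connectedComponent_bot {V : Type*} :
    Nat.card (⊥ : SimpleGraph V).ConnectedComponent = Nat.card V :=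
  (Nat.card_eq_of_bijective _ ⟨fun _ _ h => reachable_bot.mp (ConnectedComponent.exact h),
    fun c => c.exists_rep⟩).symm

lemma Fin.card_setOf_val_mod_two_eq_zero (k : ℕ) :
    Nat.card {i : Fin (2 * k) | i.val % 2 = 0} = k := by
  let e : {i : Fin (2 * k) | i.val % 2 = 0} ≃ Fin k :=
    { toFun := fun i => ⟨i.1.val / 2, by omega⟩
      invFun := fun j => ⟨⟨2 * j.val, by omega⟩, by simp⟩
      left_inv := fun ⟨i, hi⟩ => by
        have hi' : i.val % 2 = 0 := hi
        ext; simp only; omega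
      right_inv := fun j => by ext; simp }
  exact (Nat.card_congr e).trans (Nat.card_fin k)

/-- In type `Dₙ` with `n = 2k` even, `n ≥ 4`, the kernel of any acyclic exchange matrix
`B_σ` is two-dimensional, spanned by the vector `u` (equal to `e_{n-2} + e_{n-1}` if the
branching node lies strictly between the two fork nodes in the order given by `σ`, and to
`e_{n-2} - e_{n-1}` otherwise; all `0`-indexed) together with a vector `w` supported
exactly on the nodes of even `0`-indexed index (the odd nodes `1, 3, …, n-1` in
`1`-indexed notation); in particular the support of `w` has exactly `k` connected
components in the Dynkin diagram of type `Dₙ`. -/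
theorem kernel_gens_typeD_even (k : ℕ) (hk : 2 ≤ k) (σ : Equiv.Perm (Fin (2 * k))) :
    Module.finrank ℚ
        (LinearMap.ker (Matrix.toLin' (Bmat (cartanD (2 * k)) σ))) = 2 ∧
    ∃ w : Fin (2 * k) → ℚ,
      LinearMap.ker (Matrix.toLin' (Bmat (cartanD (2 * k)) σ)) =
        Submodule.span ℚ
          {if min (σ ⟨2 * k - 2, by omega⟩) (σ ⟨2 * k - 1, by omega⟩) <
                σ ⟨2 * k - 3, by omega⟩ ∧
              σ ⟨2 * k - 3, by omega⟩ <
                max (σ ⟨2 * k - 2, by omega⟩) (σ ⟨2 * k - 1, by omega⟩) then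
            Pi.single (⟨2 * k - 2, by omega⟩ : Fin (2 * k)) (1 : ℚ) +
              Pi.single (⟨2 * k - 1, by omega⟩ : Fin (2 * k)) (1 : ℚ)
          else
            Pi.single (⟨2 * k - 2, by omega⟩ : Fin (2 * k)) (1 : ℚ) -
              Pi.single (⟨2 * k - 1, by omega⟩ : Fin (2 * k)) (1 : ℚ), w} ∧
      {i : Fin (2 * k) | w i ≠ 0} = {i : Fin (2 * k) | i.val % 2 = 0} ∧
      Nat.card
        ((dynkinGraphD (2 * k)).induce
          {i : Fin (2 * k) | w i ≠ 0}).ConnectedComponent = k := by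
  have hn : 4 ≤ 2 * k := by omega
  have heven : 2 * k % 2 = 0 := by omega
  have hsupp := Set.ext (TypeD.evenVec_ne_zero_iff σ)
  refine ⟨TypeD.finrank_ker_toLin'_Bmat_cartanD σ hn heven, TypeD.evenVec σ, ?_, hsupp, ?_⟩
  · rw [TypeD.ker_toLin'_Bmat_cartanD σ hn heven, TypeD.forkVec_eq_ite]
  · rw [hsupp, TypeD.dynkinGraphD_induce_even_eq_bot heven,
      SimpleGraph.card_connectedComponent_bot, Fin.card_setOf_val_mod_two_eq_zero]
end
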